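/- Let d ≥ 1 be an integer and let ν_S be a Borel measure on (0,∞) such that ∫_0^∞ (e^{ζ u} − 1) ν_S(du) < ∞ for some ζ > 0. Define the measure ν_L on ℝ^d by ν_L(E) = ∫_0^∞ ∫_E (2π u)^{−d/2} e^{−|z|²/(2u)} dz ν_S(du) for Borel sets E ⊆ ℝ^d, where |z| is the Euclidean norm. Then ∫_{|z| ≤ 1} |z|² ν_L(dz) < ∞, and for every integer n ≥ 2, ∫_{|z| > 1} |z|ⁿ ν_L(dz) < ∞. -/
import Mathlib
open MeasureTheory

lemma integrable_rexp_gauss (d : ℕ) {b : ℝ} (hb : 0 < b) :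
    Integrable (fun z : EuclideanSpace ℝ (Fin d) ↦ Real.exp (-b * ‖z‖ ^ 2)) := by
  have h := (GaussianFourier.integrable_cexp_neg_mul_sq_norm_add
    (b := (b : ℂ)) (by simpa using hb) 0 (0 : EuclideanSpace ℝ (Fin d))).norm
  convert h using 2 with z
  simp [Complex.norm_exp, ← Complex.ofReal_pow]

lemma lintegral_gauss (d : ℕ) {b : ℝ} (hb : 0 < b) {A : ℝ} (hA : 0 ≤ A) :
    ∫⁻ z : EuclideanSpace ℝ (Fin d), ENNReal.ofReal (A * Real.exp (-b * ‖z‖ ^ 2)) =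
      ENNReal.ofReal (A * (Real.pi / b) ^ ((d : ℝ) / 2)) := by
  rw [← ofReal_integral_eq_lintegral_ofReal ((integrable_rexp_gauss d hb).const_mul A)
    (Filter.Eventually.of_forall fun z => by positivity)]
  congr 1
  rw [integral_const_mul, GaussianFourier.integral_rexp_neg_mul_sq_norm hb]
  congr 2
  simp [finrank_euclideanSpace_fin]

/-- The Gaussian-mixture density of the Lévy measure `ν_L` of a subordinated
Brownian motion: `(2π u)^{−d/2} e^{−|z|²/(2u)}`. -/
noncomputable def subGaussDensity (d : ℕ) (u : ℝ) (z : EuclideanSpace ℝ (Fin d)) : ℝ :=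
  (2 * Real.pi * u) ^ (-(d : ℝ) / 2) * Real.exp (-‖z‖ ^ 2 / (2 * u))

lemma pow_div_factorial_le_exp (n : ℕ) {t : ℝ} (ht : 0 ≤ t) :
    t ^ n / n.factorial ≤ Real.exp t := by
  calc t ^ n / n.factorial ≤ ∑ i ∈ Finset.range (n + 1), t ^ i / i.factorial :=
        Finset.single_le_sum (f := fun i => t ^ i / i.factorial)
          (fun i _ => by positivity) (Finset.self_mem_range_succ n)
    _ ≤ Real.exp t := Real.sum_le_exp_of_nonneg ht _

lemma pow_div_factorial_le_exp_sub_one {m : ℕ} (hm : 1 ≤ m) {t : ℝ} (ht : 0 ≤ t) :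
    t ^ m / m.factorial ≤ Real.exp t - 1 := by
  have h2 : (1 : ℝ) + t ^ m / m.factorial = ∑ i ∈ ({0, m} : Finset ℕ), t ^ i / i.factorial := by
    rw [Finset.sum_pair (by omega)]; simp
  have h3 : ({0, m} : Finset ℕ) ⊆ Finset.range (m + 1) := by
    intro i hi
    simp only [Finset.mem_insert, Finset.mem_singleton] at hi
    rcases hi with rfl | rfl <;> simp [Finset.mem_range]
  have h4 : (1 : ℝ) + t ^ m / m.factorial ≤ Real.exp t := by
    rw [h2]
    exact (Finset.sum_le_sum_of_subset_of_nonneg h3 (fun i _ _ => by positivity)).trans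
      (Real.sum_le_exp_of_nonneg ht _)
  linarith

lemma rpow_cancel {u : ℝ} (hu : 0 < u) (p : ℝ) :
    (2 * Real.pi * u) ^ (-p) * (Real.pi / (1 / (4 * u))) ^ p = 2 ^ p := by
  have hπ := Real.pi_pos
  have h1 : Real.pi / (1 / (4 * u)) = (2 * Real.pi * u) * 2 := by field_simp; ring
  rw [Real.rpow_neg (by positivity : (0:ℝ) ≤ 2 * Real.pi * u), h1,
    Real.mul_rpow (by positivity : (0:ℝ) ≤ 2 * Real.pi * u) (by norm_num : (0:ℝ) ≤ 2),
    ← mul_assoc, inv_mul_cancel₀ (ne_of_gt (Real.rpow_pos_of_pos (by positivity) _)), one_mul]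

lemma small_ptwise {u : ℝ} (hu : 0 < u) {x : ℝ} (hx : 0 ≤ x) :
    x * Real.exp (-x / (2 * u)) ≤ 4 * u * Real.exp (-(1 / (4 * u)) * x) := by
  have h1 : x ≤ 4 * u * Real.exp (x / (4 * u)) := by
    have h := Real.add_one_le_exp (x / (4 * u))
    have h' : 4 * u * (x / (4 * u) + 1) = x + 4 * u := by field_simp
    nlinarith [mul_le_mul_of_nonneg_left h (by positivity : (0:ℝ) ≤ 4 * u)]
  calc x * Real.exp (-x / (2 * u))
      ≤ (4 * u * Real.exp (x / (4 * u))) * Real.exp (-x / (2 * u)) :=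
        mul_le_mul_of_nonneg_right h1 (Real.exp_nonneg _)
    _ = 4 * u * Real.exp (x / (4 * u) + (-x / (2 * u))) := by rw [Real.exp_add]; ring
    _ = 4 * u * Real.exp (-(1 / (4 * u)) * x) := by congr 1; field_simp; ring

lemma large_ptwise (n : ℕ) {u y : ℝ} (hu : 0 < u) (hy : 1 < y) :
    y ^ n * Real.exp (-y ^ 2 / (2 * u)) ≤
      ((n.factorial : ℝ) * (8 * u) ^ n * Real.exp (-(1 / (8 * u)))) *
        Real.exp (-(1 / (4 * u)) * y ^ 2) := by
  have h0 : (0 : ℝ) < y := lt_trans one_pos hy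
  have hy2 : (1 : ℝ) ≤ y ^ 2 := by nlinarith
  have hyn : y ^ n ≤ (y ^ 2) ^ n := pow_le_pow_left₀ h0.le (by nlinarith) n
  have hfac : (y ^ 2 / (8 * u)) ^ n / n.factorial ≤ Real.exp (y ^ 2 / (8 * u)) :=
    pow_div_factorial_le_exp n (by positivity)
  have h2 : (y ^ 2) ^ n ≤ (n.factorial : ℝ) * (8 * u) ^ n * Real.exp (y ^ 2 / (8 * u)) := by
    have h8 : (0 : ℝ) < (8 * u) ^ n := by positivity
    have := (div_le_iff₀ (by positivity : (0:ℝ) < (n.factorial : ℝ))).mp hfac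
    calc (y ^ 2) ^ n = (y ^ 2 / (8 * u)) ^ n * (8 * u) ^ n := by
          rw [div_pow, div_mul_cancel₀]; positivity
      _ ≤ (Real.exp (y ^ 2 / (8 * u)) * n.factorial) * (8 * u) ^ n :=
          mul_le_mul_of_nonneg_right this h8.le
      _ = (n.factorial : ℝ) * (8 * u) ^ n * Real.exp (y ^ 2 / (8 * u)) := by ring
  have hmid : Real.exp (-y ^ 2 / (8 * u)) ≤ Real.exp (-(1 / (8 * u))) := by
    apply Real.exp_le_exp.2
    rw [neg_div]
    apply neg_le_neg
    exact (div_le_div_iff_of_pos_right (by positivity)).2 hy2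
  calc y ^ n * Real.exp (-y ^ 2 / (2 * u))
      ≤ ((n.factorial : ℝ) * (8 * u) ^ n * Real.exp (y ^ 2 / (8 * u))) *
          Real.exp (-y ^ 2 / (2 * u)) := by
        apply mul_le_mul (hyn.trans h2) le_rfl (Real.exp_nonneg _)
        positivity
    _ = (n.factorial : ℝ) * (8 * u) ^ n *
          Real.exp (y ^ 2 / (8 * u) + (-y ^ 2 / (2 * u))) := by rw [Real.exp_add]; ring
    _ = (n.factorial : ℝ) * (8 * u) ^ n *
          (Real.exp (-y ^ 2 / (8 * u)) * Real.exp (-(1 / (4 * u)) * y ^ 2)) := by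
        rw [← Real.exp_add]; congr 2; field_simp; ring
    _ ≤ (n.factorial : ℝ) * (8 * u) ^ n *
          (Real.exp (-(1 / (8 * u))) * Real.exp (-(1 / (4 * u)) * y ^ 2)) := by
        apply mul_le_mul_of_nonneg_left _ (by positivity)
        exact mul_le_mul_of_nonneg_right hmid (Real.exp_nonneg _)
    _ = _ := by ring

lemma inner_bound (d n : ℕ) {u : ℝ} (hu : 0 < u) :
    ∫⁻ z in {z : EuclideanSpace ℝ (Fin d) | 1 < ‖z‖},
        ENNReal.ofReal (subGaussDensity d u z * ‖z‖ ^ n)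
      ≤ ENNReal.ofReal (2 ^ ((d : ℝ) / 2) *
          ((n.factorial : ℝ) * (8 * u) ^ n * Real.exp (-(1 / (8 * u))))) := by
  have hπ := Real.pi_pos
  have hb : (0 : ℝ) < 1 / (4 * u) := by positivity
  set A : ℝ := (2 * Real.pi * u) ^ (-(d : ℝ) / 2) with hA
  have hA0 : 0 ≤ A := Real.rpow_nonneg (by positivity) _
  set K : ℝ := (n.factorial : ℝ) * (8 * u) ^ n * Real.exp (-(1 / (8 * u))) with hK
  have hK0 : 0 ≤ K := by positivity
  have hmeas : MeasurableSet {z : EuclideanSpace ℝ (Fin d) | 1 < ‖z‖} :=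
    measurableSet_lt measurable_const continuous_norm.measurable
  calc ∫⁻ z in {z : EuclideanSpace ℝ (Fin d) | 1 < ‖z‖},
        ENNReal.ofReal (subGaussDensity d u z * ‖z‖ ^ n)
      ≤ ∫⁻ z in {z : EuclideanSpace ℝ (Fin d) | 1 < ‖z‖},
          ENNReal.ofReal ((A * K) * Real.exp (-(1 / (4 * u)) * ‖z‖ ^ 2)) := by
        apply setLIntegral_mono' hmeas
        intro z hz
        apply ENNReal.ofReal_le_ofReal
        have := large_ptwise n hu (hz : 1 < ‖z‖)
        unfold subGaussDensity
        calc (2 * Real.pi * u) ^ (-(d : ℝ) / 2) * Real.exp (-‖z‖ ^ 2 / (2 * u)) * ‖z‖ ^ n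
            = A * (‖z‖ ^ n * Real.exp (-‖z‖ ^ 2 / (2 * u))) := by rw [hA]; ring
          _ ≤ A * (K * Real.exp (-(1 / (4 * u)) * ‖z‖ ^ 2)) :=
              mul_le_mul_of_nonneg_left this hA0
          _ = (A * K) * Real.exp (-(1 / (4 * u)) * ‖z‖ ^ 2) := by ring
    _ ≤ ∫⁻ z : EuclideanSpace ℝ (Fin d),
          ENNReal.ofReal ((A * K) * Real.exp (-(1 / (4 * u)) * ‖z‖ ^ 2)) :=
        setLIntegral_le_lintegral _ _
    _ = ENNReal.ofReal ((A * K) * (Real.pi / (1 / (4 * u))) ^ ((d : ℝ) / 2)) :=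
        lintegral_gauss d hb (by positivity)
    _ = ENNReal.ofReal (2 ^ ((d : ℝ) / 2) * K) := by
        congr 1
        have := rpow_cancel hu ((d : ℝ) / 2)
        calc A * K * (Real.pi / (1 / (4 * u))) ^ ((d : ℝ) / 2)
            = ((2 * Real.pi * u) ^ (-((d : ℝ) / 2)) *
                (Real.pi / (1 / (4 * u))) ^ ((d : ℝ) / 2)) * K := by
              rw [hA, neg_div]; ring
          _ = 2 ^ ((d : ℝ) / 2) * K := by rw [this]

lemma inner_small (d : ℕ) {u : ℝ} (hu : 0 < u) :
    ∫⁻ z in {z : EuclideanSpace ℝ (Fin d) | ‖z‖ ≤ 1},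
        ENNReal.ofReal (subGaussDensity d u z * ‖z‖ ^ 2)
      ≤ ENNReal.ofReal (2 ^ ((d : ℝ) / 2) * (4 * u)) := by
  have hπ := Real.pi_pos
  have hb : (0 : ℝ) < 1 / (4 * u) := by positivity
  set A : ℝ := (2 * Real.pi * u) ^ (-(d : ℝ) / 2) with hA
  have hA0 : 0 ≤ A := Real.rpow_nonneg (by positivity) _
  have hmeas : MeasurableSet {z : EuclideanSpace ℝ (Fin d) | ‖z‖ ≤ 1} :=
    measurableSet_le continuous_norm.measurable measurable_const
  calc ∫⁻ z in {z : EuclideanSpace ℝ (Fin d) | ‖z‖ ≤ 1},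
        ENNReal.ofReal (subGaussDensity d u z * ‖z‖ ^ 2)
      ≤ ∫⁻ z in {z : EuclideanSpace ℝ (Fin d) | ‖z‖ ≤ 1},
          ENNReal.ofReal ((A * (4 * u)) * Real.exp (-(1 / (4 * u)) * ‖z‖ ^ 2)) := by
        apply setLIntegral_mono' hmeas
        intro z _
        apply ENNReal.ofReal_le_ofReal
        have h := small_ptwise hu (sq_nonneg ‖z‖)
        unfold subGaussDensity
        calc (2 * Real.pi * u) ^ (-(d : ℝ) / 2) * Real.exp (-‖z‖ ^ 2 / (2 * u)) * ‖z‖ ^ 2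
            = A * (‖z‖ ^ 2 * Real.exp (-‖z‖ ^ 2 / (2 * u))) := by rw [hA]; ring
          _ ≤ A * (4 * u * Real.exp (-(1 / (4 * u)) * ‖z‖ ^ 2)) :=
              mul_le_mul_of_nonneg_left h hA0
          _ = (A * (4 * u)) * Real.exp (-(1 / (4 * u)) * ‖z‖ ^ 2) := by ring
    _ ≤ ∫⁻ z : EuclideanSpace ℝ (Fin d),
          ENNReal.ofReal ((A * (4 * u)) * Real.exp (-(1 / (4 * u)) * ‖z‖ ^ 2)) :=
        setLIntegral_le_lintegral _ _
    _ = ENNReal.ofReal ((A * (4 * u)) * (Real.pi / (1 / (4 * u))) ^ ((d : ℝ) / 2)) :=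
        lintegral_gauss d hb (by positivity)
    _ = ENNReal.ofReal (2 ^ ((d : ℝ) / 2) * (4 * u)) := by
        congr 1
        have h2 := rpow_cancel hu ((d : ℝ) / 2)
        calc A * (4 * u) * (Real.pi / (1 / (4 * u))) ^ ((d : ℝ) / 2)
            = ((2 * Real.pi * u) ^ (-((d : ℝ) / 2)) *
                (Real.pi / (1 / (4 * u))) ^ ((d : ℝ) / 2)) * (4 * u) := by
              rw [hA, neg_div]; ring
          _ = 2 ^ ((d : ℝ) / 2) * (4 * u) := by rw [h2]

lemma finalize (νS : Measure ℝ) {ζ : ℝ} (hζ : 0 < ζ)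
    (hfin : (∫⁻ u in Set.Ioi (0 : ℝ), ENNReal.ofReal (Real.exp (ζ * u) - 1) ∂νS) < ⊤)
    {g : ℝ → ENNReal} {C : ℝ} (hC : 0 ≤ C)
    (h : ∀ u ∈ Set.Ioi (0 : ℝ), g u ≤ ENNReal.ofReal (C * (Real.exp (ζ * u) - 1))) :
    (∫⁻ u in Set.Ioi (0 : ℝ), g u ∂νS) < ⊤ := by
  calc ∫⁻ u in Set.Ioi (0 : ℝ), g u ∂νS
      ≤ ∫⁻ u in Set.Ioi (0 : ℝ),
          ENNReal.ofReal C * ENNReal.ofReal (Real.exp (ζ * u) - 1) ∂νS := by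
        apply setLIntegral_mono' measurableSet_Ioi
        intro u hu
        rw [← ENNReal.ofReal_mul hC]
        exact h u hu
    _ = ENNReal.ofReal C * ∫⁻ u in Set.Ioi (0 : ℝ),
          ENNReal.ofReal (Real.exp (ζ * u) - 1) ∂νS :=
        lintegral_const_mul' _ _ ENNReal.ofReal_ne_top
    _ < ⊤ := ENNReal.mul_lt_top ENNReal.ofReal_lt_top hfin

theorem levy_measure_moments (d : ℕ) (hd : 1 ≤ d) (νS : Measure ℝ)
    (hνS : ∃ ζ : ℝ, 0 < ζ ∧
      (∫⁻ u in Set.Ioi (0 : ℝ), ENNReal.ofReal (Real.exp (ζ * u) - 1) ∂νS) < ⊤) :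
    (∫⁻ u in Set.Ioi (0 : ℝ),
        (∫⁻ z in {z : EuclideanSpace ℝ (Fin d) | ‖z‖ ≤ 1},
          ENNReal.ofReal (subGaussDensity d u z * ‖z‖ ^ 2)) ∂νS) < ⊤ ∧
    ∀ n : ℕ, 2 ≤ n →
      (∫⁻ u in Set.Ioi (0 : ℝ),
          (∫⁻ z in {z : EuclideanSpace ℝ (Fin d) | 1 < ‖z‖},
            ENNReal.ofReal (subGaussDensity d u z * ‖z‖ ^ n)) ∂νS) < ⊤ := by
  obtain ⟨ζ, hζ, hfin⟩ := hνS
  have hpow : (0 : ℝ) < 2 ^ ((d : ℝ) / 2) := Real.rpow_pos_of_pos two_pos _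
  constructor
  · apply finalize νS hζ hfin (C := 2 ^ ((d : ℝ) / 2) * 4 / ζ) (by positivity)
    intro u hu
    have hu' : (0 : ℝ) < u := hu
    refine (inner_small d hu').trans (ENNReal.ofReal_le_ofReal ?_)
    have h1 : ζ * u ≤ Real.exp (ζ * u) - 1 := by linarith [Real.add_one_le_exp (ζ * u)]
    calc 2 ^ ((d : ℝ) / 2) * (4 * u)
        = (2 ^ ((d : ℝ) / 2) * 4 / ζ) * (ζ * u) := by field_simp
      _ ≤ (2 ^ ((d : ℝ) / 2) * 4 / ζ) * (Real.exp (ζ * u) - 1) :=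
          mul_le_mul_of_nonneg_left h1 (by positivity)
  · intro n hn
    set C : ℝ := 2 ^ ((d : ℝ) / 2) * (n.factorial : ℝ) * 8 ^ (n + 1) *
      (((n + 1).factorial : ℝ) / ζ ^ (n + 1)) with hC
    apply finalize νS hζ hfin (C := C) (by positivity)
    intro u hu
    have hu' : (0 : ℝ) < u := hu
    refine (inner_bound d n hu').trans (ENNReal.ofReal_le_ofReal ?_)
    -- exp(-(1/(8u))) ≤ 8u
    have e1 : Real.exp (-(1 / (8 * u))) ≤ 8 * u := by
      rw [Real.exp_neg]
      have h2 : (8 * u)⁻¹ ≤ Real.exp (1 / (8 * u)) := by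
        rw [← one_div]; linarith [Real.add_one_le_exp (1 / (8 * u))]
      calc (Real.exp (1 / (8 * u)))⁻¹ ≤ ((8 * u)⁻¹)⁻¹ :=
            inv_anti₀ (by positivity) h2
        _ = 8 * u := inv_inv _
    have e2 : u ^ (n + 1) ≤ ((n + 1).factorial : ℝ) / ζ ^ (n + 1) *
        (Real.exp (ζ * u) - 1) := by
      have h := pow_div_factorial_le_exp_sub_one (m := n + 1) (by omega)
        (t := ζ * u) (by positivity)
      have hζp : (0 : ℝ) < ζ ^ (n + 1) := by positivity
      rw [div_le_iff₀ (by positivity : (0:ℝ) < ((n+1).factorial : ℝ))] at h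
      rw [div_mul_eq_mul_div, le_div_iff₀ hζp]
      calc u ^ (n + 1) * ζ ^ (n + 1) = (ζ * u) ^ (n + 1) := by rw [mul_pow]; ring
        _ ≤ (Real.exp (ζ * u) - 1) * ((n + 1).factorial : ℝ) := h
        _ = ((n + 1).factorial : ℝ) * (Real.exp (ζ * u) - 1) := by ring
    calc 2 ^ ((d : ℝ) / 2) * ((n.factorial : ℝ) * (8 * u) ^ n * Real.exp (-(1 / (8 * u))))
        ≤ 2 ^ ((d : ℝ) / 2) * ((n.factorial : ℝ) * (8 * u) ^ n * (8 * u)) := by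
          gcongr
      _ = (2 ^ ((d : ℝ) / 2) * (n.factorial : ℝ) * 8 ^ (n + 1)) * u ^ (n + 1) := by
          rw [mul_pow]; ring
      _ ≤ (2 ^ ((d : ℝ) / 2) * (n.factorial : ℝ) * 8 ^ (n + 1)) *
            (((n + 1).factorial : ℝ) / ζ ^ (n + 1) * (Real.exp (ζ * u) - 1)) :=
          mul_le_mul_of_nonneg_left e2 (by positivity)
      _ = C * (Real.exp (ζ * u) - 1) := by rw [hC]; ring
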